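/- arXiv:2508.12139 — 3 statements merged into one kernel-verified Lean document; each statement's English description precedes it below -/
import Mathlib

section
/- Let α, θ ∈ ℝ, and suppose r, s are coprime integers with |α − r/s| ≤ 1/s². Let P, M, N be positive reals with N ≥ 16sP². Let E be the set of integers m with |m| ≤ M for which there exist coprime integers a, q with 0 < q < P and |θ + mα − a/q| ≤ P/(qN). Then |E| ≤ 16MP²/s + 1. -/
open Classical

/-- Distance from a real number to the nearest integer. -/
noncomputable def distNearestInt (x : ℝ) : ℝ := |x - round x|

/-! Two shifts `m ≠ m'` whose phases `θ + mα`, `θ + m'α` both lie near fractions `a/q`,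
`a'/q'` with `q, q' < P` give `(m - m')α ≈ (aq' - a'q)/(qq')`. Replacing `α` by `r/s`, the
fractions `(m - m')r/s` and `(aq' - a'q)/(qq')` are closer than `1/(sqq')`, so they coincide and
`s ∣ (m - m')qq'`. As `qq' < P²`, this forces `|m - m'| > s/(2P²)`, and at most `4MP²/s + 1`
such shifts fit into `[-M, M]`. -/

theorem Finset.card_le_div_add_one_of_pairwise_le_abs_sub {S : Finset ℝ} {a b g : ℝ}
    (hg : 0 < g) (hab : a ≤ b) (hS : ∀ x ∈ S, x ∈ Set.Icc a b)
    (hsep : (S : Set ℝ).Pairwise fun x y => g ≤ |x - y|) :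
    (S.card : ℝ) ≤ (b - a) / g + 1 := by
  set L := ⌊(b - a) / g⌋
  have hL : 0 ≤ L := Int.floor_nonneg.mpr (div_nonneg (sub_nonneg.mpr hab) hg.le)
  -- Points at distance at least `g` land in distinct cells of the grid `a + gℤ`.
  have hcard : S.card ≤ (Finset.Icc 0 L).card := by
    refine Finset.card_le_card_of_injOn (fun x => ⌊(x - a) / g⌋) (fun x hx => ?_)
      (fun x hx y hy hxy => ?_)
    · obtain ⟨hax, hxb⟩ := hS x hx
      rw [Finset.coe_Icc, Set.mem_Icc]
      exact ⟨Int.floor_nonneg.mpr (div_nonneg (sub_nonneg.mpr hax) hg.le),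
        Int.floor_le_floor (by gcongr)⟩
    · by_contra hne
      have hclose := Int.abs_sub_lt_one_of_floor_eq_floor hxy
      rw [← sub_div, sub_sub_sub_cancel_right, abs_div, abs_of_pos hg, div_lt_one hg] at hclose
      exact (hsep hx hy hne).not_gt hclose
  rw [Int.card_Icc, sub_zero] at hcard
  calc (S.card : ℝ) ≤ ((L + 1).toNat : ℤ) := by exact_mod_cast hcard
    _ = L + 1 := by rw [Int.toNat_of_nonneg (by omega)]; push_cast; ring
    _ ≤ (b - a) / g + 1 := by gcongr; exact Int.floor_le _

theorem IsCoprime.dvd_mul_of_abs_sub_div_lt {r s δ B Q : ℤ} (hrs : IsCoprime r s) (hs : 0 < s)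
    (hQ : 0 < Q) (h : |(δ : ℝ) * (r / s) - B / Q| < 1 / (s * Q)) : s ∣ δ * Q := by
  have hsQ : (0 : ℝ) < s * Q := by positivity
  have hnum : |((δ * r * Q - B * s : ℤ) : ℝ)| < 1 := by
    have : ((δ * r * Q - B * s : ℤ) : ℝ) = (s * Q) * ((δ : ℝ) * (r / s) - B / Q) := by
      push_cast
      field_simp
    rw [this, abs_mul, abs_of_pos hsQ]
    calc (s * Q : ℝ) * |(δ : ℝ) * (r / s) - B / Q| < (s * Q) * (1 / (s * Q)) := by gcongr
      _ = 1 := by field_simp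
  have hzero : δ * r * Q - B * s = 0 := Int.abs_lt_one_iff.mp (by exact_mod_cast hnum)
  exact hrs.symm.dvd_of_dvd_mul_right ⟨B, by linear_combination hzero⟩

theorem add_div_sq_lt_one_div_of_le {s P N q q' d : ℝ} (hs : 0 < s) (hq : 0 < q)
    (hq' : 0 < q') (hqP : q < P) (hq'P : q' < P) (hNs : 16 * s * P ^ 2 ≤ N)
    (hd0 : 0 ≤ d) (hd : d ≤ s / (2 * P ^ 2)) :
    P / (q * N) + P / (q' * N) + d / s ^ 2 < 1 / (s * (q * q')) := by
  have hP : 0 < P := hq.trans hqP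
  have hN : 0 < N := lt_of_lt_of_le (by positivity) hNs
  have hexpand : (P / (q * N) + P / (q' * N) + d / s ^ 2) * (s * (q * q'))
      = s * P * q' / N + s * P * q / N + q * q' * d / s := by
    field_simp
  have hfirst : s * P * q' / N ≤ 1 / 16 := by
    rw [div_le_iff₀ hN]
    nlinarith [mul_pos hs hP]
  have hsecond : s * P * q / N ≤ 1 / 16 := by
    rw [div_le_iff₀ hN]
    nlinarith [mul_pos hs hP]
  have hthird : q * q' * d / s ≤ 1 / 2 := by
    rw [div_le_iff₀ hs]
    calc q * q' * d ≤ P ^ 2 * (s / (2 * P ^ 2)) := by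
          gcongr
          nlinarith
      _ = 1 / 2 * s := by field_simp
  rw [lt_div_iff₀ (by positivity), hexpand]
  linarith

theorem abs_sub_mul_sub_div_le {α β θ x x' a a' q q' : ℝ} (hq : q ≠ 0) (hq' : q' ≠ 0) :
    |(x - x') * β - (a * q' - a' * q) / (q * q')|
      ≤ |θ + x * α - a / q| + |θ + x' * α - a' / q'| + |x - x'| * |α - β| := by
  have hsplit : (x - x') * β - (a * q' - a' * q) / (q * q')
      = (θ + x * α - a / q) - (θ + x' * α - a' / q') - (x - x') * (α - β) := by
    field_simp
    ring
  rw [hsplit, ← abs_mul]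
  exact (abs_sub _ _).trans (add_le_add_left (abs_sub _ _) _)

theorem div_two_mul_sq_lt_abs_sub {α θ P N : ℝ} {r s : ℤ} (hrs : IsCoprime r s) (hs : 0 < s)
    (hα : |α - r / s| ≤ 1 / (s : ℝ) ^ 2) (hNs : 16 * (s : ℝ) * P ^ 2 ≤ N)
    {m m' a q a' q' : ℤ} (hm : m ≠ m') (hq : 0 < q) (hqP : (q : ℝ) < P)
    (hq' : 0 < q') (hq'P : (q' : ℝ) < P)
    (happrox : |θ + m * α - a / q| ≤ P / (q * N))
    (happrox' : |θ + m' * α - a' / q'| ≤ P / (q' * N)) :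
    (s : ℝ) / (2 * P ^ 2) < |(m : ℝ) - m'| := by
  by_contra! hclose
  have hsR : (0 : ℝ) < s := by exact_mod_cast hs
  have hqR : (0 : ℝ) < q := by exact_mod_cast hq
  have hq'R : (0 : ℝ) < q' := by exact_mod_cast hq'
  have hP : 0 < P := hqR.trans hqP
  have hfrac :
      |((m - m' : ℤ) : ℝ) * (r / s) - ((a * q' - a' * q : ℤ) : ℝ) / ((q * q' : ℤ) : ℝ)|
        < 1 / (s * ((q * q' : ℤ) : ℝ)) := by
    push_cast
    calc _ ≤ |θ + m * α - a / q| + |θ + m' * α - a' / q'| + |(m : ℝ) - m'| * |α - r / s| :=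
          abs_sub_mul_sub_div_le hqR.ne' hq'R.ne'
      _ ≤ P / (q * N) + P / (q' * N) + |(m : ℝ) - m'| * (1 / (s : ℝ) ^ 2) := by gcongr
      _ < _ := by
          rw [mul_one_div]
          exact add_div_sq_lt_one_div_of_le hsR hqR hq'R hqP hq'P hNs (abs_nonneg _) hclose
  have hsle : s ≤ |m - m'| * (q * q') := by
    have hdvd := hrs.dvd_mul_of_abs_sub_div_lt hs (mul_pos hq hq') hfrac
    have hne : (m - m') * (q * q') ≠ 0 := mul_ne_zero (sub_ne_zero.mpr hm) (mul_pos hq hq').ne'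
    rw [← abs_of_pos (mul_pos hq hq'), ← abs_mul]
    exact Int.le_of_dvd (abs_pos.mpr hne) ((dvd_abs _ _).mpr hdvd)
  have hsleR : (s : ℝ) ≤ |(m : ℝ) - m'| * (q * q') := by exact_mod_cast hsle
  have hqq' : (q : ℝ) * q' < P ^ 2 := by nlinarith
  have hlt : |(m : ℝ) - m'| * (q * q') < s :=
    calc |(m : ℝ) - m'| * (q * q') ≤ s / (2 * P ^ 2) * (q * q') := by gcongr
      _ < s / (2 * P ^ 2) * P ^ 2 := by gcongr
      _ = s / 2 := by field_simp
      _ < s := by linarith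
  linarith

theorem stmt0_general (α θ : ℝ) (r s : ℤ) (hrs : IsCoprime r s) (hs : 0 < s)
    (hα : |α - (r : ℝ) / (s : ℝ)| ≤ 1 / (s : ℝ) ^ 2)
    (P M N : ℝ) (hP : 0 < P) (hM : 0 < M)
    (hNs : 16 * (s : ℝ) * P ^ 2 ≤ N) :
    (((Finset.Icc ⌈-M⌉ ⌊M⌋).filter (fun m : ℤ =>
      ∃ a q : ℤ, IsCoprime a q ∧ 0 < q ∧ (q : ℝ) < P ∧
        |θ + (m : ℝ) * α - (a : ℝ) / (q : ℝ)| ≤ P / ((q : ℝ) * N))).card : ℝ) ≤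
      16 * M * P ^ 2 / (s : ℝ) + 1 := by
  set E := (Finset.Icc ⌈-M⌉ ⌊M⌋).filter (fun m : ℤ =>
      ∃ a q : ℤ, IsCoprime a q ∧ 0 < q ∧ (q : ℝ) < P ∧
        |θ + (m : ℝ) * α - (a : ℝ) / (q : ℝ)| ≤ P / ((q : ℝ) * N))
  have hsR : (0 : ℝ) < s := by exact_mod_cast hs
  have hbound : ∀ x ∈ E.image (Int.cast : ℤ → ℝ), x ∈ Set.Icc (-M) M := by
    simp only [Finset.mem_image, Finset.mem_filter, Finset.mem_Icc, E]
    rintro _ ⟨m, ⟨⟨hlo, hhi⟩, -⟩, rfl⟩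
    exact ⟨Int.ceil_le.mp hlo, Int.le_floor.mp hhi⟩
  have hsep : ((E.image (Int.cast : ℤ → ℝ) : Finset ℝ) : Set ℝ).Pairwise
      fun x y => (s : ℝ) / (2 * P ^ 2) ≤ |x - y| := by
    simp only [Finset.coe_image, Finset.coe_filter, E]
    rintro _ ⟨m, ⟨-, a, q, -, hq, hqP, happrox⟩, rfl⟩
      _ ⟨m', ⟨-, a', q', -, hq', hq'P, happrox'⟩, rfl⟩ hne
    exact (div_two_mul_sq_lt_abs_sub hrs hs hα hNs (by rintro rfl; exact hne rfl) hq hqP hq'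
      hq'P happrox happrox').le
  have hcount := Finset.card_le_div_add_one_of_pairwise_le_abs_sub (by positivity)
    (by linarith) hbound hsep
  rw [Finset.card_image_of_injective _ Int.cast_injective] at hcount
  calc (E.card : ℝ) ≤ (M - -M) / (s / (2 * P ^ 2)) + 1 := hcount
    _ = 4 * M * P ^ 2 / s + 1 := by field_simp; ring
    _ ≤ 16 * M * P ^ 2 / s + 1 := by gcongr; norm_num

theorem stmt0 (α θ : ℝ) (r s : ℤ) (hrs : IsCoprime r s) (hs : 0 < s)
    (hα : |α - (r : ℝ) / (s : ℝ)| ≤ 1 / (s : ℝ) ^ 2)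
    (P M N : ℝ) (hP : 0 < P) (hM : 0 < M) (hN : 0 < N)
    (hNs : 16 * (s : ℝ) * P ^ 2 ≤ N) :
    (((Finset.Icc ⌈-M⌉ ⌊M⌋).filter (fun m : ℤ =>
      ∃ a q : ℤ, IsCoprime a q ∧ 0 < q ∧ (q : ℝ) < P ∧
        |θ + (m : ℝ) * α - (a : ℝ) / (q : ℝ)| ≤ P / ((q : ℝ) * N))).card : ℝ) ≤
      16 * M * P ^ 2 / (s : ℝ) + 1 :=
  stmt0_general α θ r s hrs hs hα P M N hP hM hNs
end

section
/- Let α, θ ∈ ℝ, r, s coprime integers with |α − r/s| ≤ 1/s², and P, M, N positive reals with N ≥ 16sP². Suppose m₁ ≠ m₂ are integers in [−M, M] with |m₁ − m₂| ≤ s/(8P²), and for j = 1, 2 there exist coprime integers a_j, q_j with 0 < q_j < P and |θ + m_jα − a_j/q_j| ≤ P/(q_jN). Then a contradiction follows; i.e., no two such distinct m₁, m₂ can be that close. -/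
/-!
Put `d = m₁ - m₂`. Subtracting the two approximations, `d α` lies within `P/(q₁N) + P/(q₂N)` of
`a₁/q₁ - a₂/q₂`, and `d r/s` lies within `|d|/s²` of `d α`. On the other hand
`0 < |d| q₁ q₂ < |d| P² ≤ s/8`, so `s ∤ d q₁ q₂`, and since `r` is prime to `s` the rationals
`d r/s` and `a₁/q₁ - a₂/q₂` are at least `1/(s q₁ q₂)` apart.
Multiplying through by `s q₁ q₂` gives `1 ≤ 1/8 + 2 s P²/N ≤ 1/4`.
-/

theorem Int.one_le_abs_mul_sub_mul {r s n : ℤ} (hrs : IsCoprime r s) (hn : n ≠ 0)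
    (hns : |n| < s) (b : ℤ) : 1 ≤ |n * r - b * s| := by
  refine Int.one_le_abs fun h => ?_
  have hsn : s ∣ n := hrs.symm.dvd_of_dvd_mul_left ⟨b, by linear_combination h⟩
  exact (Int.le_of_dvd (abs_pos.2 hn) ((dvd_abs _ _).2 hsn)).not_gt hns

theorem one_le_mul_abs_mul_div_sub_sub_div {r s d a₁ q₁ a₂ q₂ : ℤ} (hrs : IsCoprime r s)
    (hq₁ : 0 < q₁) (hq₂ : 0 < q₂) (hd : d ≠ 0) (hdq : |d| * (q₁ * q₂) < s) :
    1 ≤ (s : ℝ) * q₁ * q₂ * |(d : ℝ) * (r / s) - (a₁ / q₁ - a₂ / q₂)| := by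
  have hs : 0 < s := lt_of_le_of_lt (by positivity) hdq
  have hsq : (0 : ℝ) < s * q₁ * q₂ := by positivity
  have hk : (s : ℝ) * q₁ * q₂ * |(d : ℝ) * (r / s) - (a₁ / q₁ - a₂ / q₂)|
      = |((d * (q₁ * q₂) * r - (a₁ * q₂ - a₂ * q₁) * s : ℤ) : ℝ)| := by
    rw [← abs_of_pos hsq, ← abs_mul]
    congr 1
    push_cast
    field_simp
  rw [hk]
  exact_mod_cast Int.one_le_abs_mul_sub_mul hrs (mul_ne_zero hd (mul_pos hq₁ hq₂).ne')
    (by rwa [abs_mul, abs_of_pos (mul_pos hq₁ hq₂)]) _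

theorem abs_sub_mul_sub_sub_le {α ρ θ m₁ m₂ x₁ x₂ ε e₁ e₂ : ℝ} (hα : |α - ρ| ≤ ε)
    (h₁ : |θ + m₁ * α - x₁| ≤ e₁) (h₂ : |θ + m₂ * α - x₂| ≤ e₂) :
    |(m₁ - m₂) * ρ - (x₁ - x₂)| ≤ |m₁ - m₂| * ε + (e₁ + e₂) := by
  have h : (m₁ - m₂) * ρ - (x₁ - x₂)
      = -((m₁ - m₂) * (α - ρ)) + ((θ + m₁ * α - x₁) - (θ + m₂ * α - x₂)) := by ring
  rw [h]
  refine (abs_add_le _ _).trans (add_le_add ?_ ((abs_sub _ _).trans (add_le_add h₁ h₂)))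
  rw [abs_neg, abs_mul]
  exact mul_le_mul_of_nonneg_left hα (abs_nonneg _)

theorem stmt1_general (α θ : ℝ) (r s : ℤ) (hrs : IsCoprime r s) (hs : 0 < s)
    (hα : |α - (r : ℝ) / (s : ℝ)| ≤ 1 / (s : ℝ) ^ 2)
    (P N : ℝ) (hP : 0 < P) (hN : 0 < N)
    (hNs : 16 * (s : ℝ) * P ^ 2 ≤ N)
    (m₁ m₂ : ℤ) (hne : m₁ ≠ m₂)
    (hclose : |(m₁ : ℝ) - (m₂ : ℝ)| ≤ (s : ℝ) / (8 * P ^ 2))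
    (a₁ q₁ a₂ q₂ : ℤ)
    (hq₁ : 0 < q₁) (hq₁P : (q₁ : ℝ) < P)
    (hq₂ : 0 < q₂) (hq₂P : (q₂ : ℝ) < P)
    (happrox₁ : |θ + (m₁ : ℝ) * α - (a₁ : ℝ) / (q₁ : ℝ)| ≤ P / ((q₁ : ℝ) * N))
    (happrox₂ : |θ + (m₂ : ℝ) * α - (a₂ : ℝ) / (q₂ : ℝ)| ≤ P / ((q₂ : ℝ) * N)) :
    False := by
  have hq₁' : (0 : ℝ) < q₁ := by exact_mod_cast hq₁
  have hq₂' : (0 : ℝ) < q₂ := by exact_mod_cast hq₂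
  have hs' : (0 : ℝ) < s := by exact_mod_cast hs
  have hd : 0 < |(m₁ : ℝ) - m₂| := abs_pos.2 (sub_ne_zero.2 (by exact_mod_cast hne))
  have hdP : |(m₁ : ℝ) - m₂| * P ^ 2 ≤ s / 8 := by
    have := (le_div_iff₀ (by positivity)).1 hclose
    linarith
  have hdq : |(m₁ : ℝ) - m₂| * (q₁ * q₂) < s / 8 := by
    nlinarith [mul_lt_mul_of_pos_left (mul_lt_mul'' hq₁P hq₂P hq₁'.le hq₂'.le) hd]
  have hsep := one_le_mul_abs_mul_div_sub_sub_div (a₁ := a₁) (a₂ := a₂) hrs hq₁ hq₂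
    (sub_ne_zero.2 hne) (by exact_mod_cast (by linarith : |(m₁ : ℝ) - m₂| * (q₁ * q₂) < s))
  push_cast at hsep
  have hsmall₁ : (q₁ : ℝ) * q₂ * |(m₁ : ℝ) - m₂| / s ≤ 1 / 8 := by
    rw [div_le_iff₀ hs']
    linarith
  have hsmall₂ : (s : ℝ) * P * (q₁ + q₂) / N ≤ 1 / 8 := by
    rw [div_le_iff₀ hN]
    nlinarith [mul_pos hs' hP]
  have hone : (1 : ℝ) ≤ 1 / 4 := calc
    1 ≤ (s : ℝ) * q₁ * q₂ * (|(m₁ : ℝ) - m₂| * (1 / s ^ 2) + (P / (q₁ * N) + P / (q₂ * N))) :=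
      hsep.trans (by gcongr; exact abs_sub_mul_sub_sub_le hα happrox₁ happrox₂)
    _ = (q₁ : ℝ) * q₂ * |(m₁ : ℝ) - m₂| / s + (s : ℝ) * P * (q₁ + q₂) / N := by
      field_simp
      ring
    _ ≤ 1 / 4 := by linarith
  norm_num at hone

theorem stmt1 (α θ : ℝ) (r s : ℤ) (hrs : IsCoprime r s) (hs : 0 < s)
    (hα : |α - (r : ℝ) / (s : ℝ)| ≤ 1 / (s : ℝ) ^ 2)
    (P M N : ℝ) (hP : 0 < P) (hM : 0 < M) (hN : 0 < N)
    (hNs : 16 * (s : ℝ) * P ^ 2 ≤ N)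
    (m₁ m₂ : ℤ) (hne : m₁ ≠ m₂)
    (hm₁ : |(m₁ : ℝ)| ≤ M) (hm₂ : |(m₂ : ℝ)| ≤ M)
    (hclose : |(m₁ : ℝ) - (m₂ : ℝ)| ≤ (s : ℝ) / (8 * P ^ 2))
    (a₁ q₁ a₂ q₂ : ℤ)
    (hc₁ : IsCoprime a₁ q₁) (hq₁ : 0 < q₁) (hq₁P : (q₁ : ℝ) < P)
    (hc₂ : IsCoprime a₂ q₂) (hq₂ : 0 < q₂) (hq₂P : (q₂ : ℝ) < P)
    (happrox₁ : |θ + (m₁ : ℝ) * α - (a₁ : ℝ) / (q₁ : ℝ)| ≤ P / ((q₁ : ℝ) * N))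
    (happrox₂ : |θ + (m₂ : ℝ) * α - (a₂ : ℝ) / (q₂ : ℝ)| ≤ P / ((q₂ : ℝ) * N)) :
    False :=
  stmt1_general α θ r s hrs hs hα P N hP hN hNs m₁ m₂ hne hclose a₁ q₁ a₂ q₂ hq₁ hq₁P hq₂ hq₂P
    happrox₁ happrox₂
end

section
/- Let α, θ ∈ ℝ, and let r, s be coprime integers with |α − r/s| ≤ 1/s². Let P, M, N be positive reals with N ≥ 16sP². Let a, q be coprime integers with 0 < 2q < P. Suppose m is an integer with |m| ≤ M, and suppose there exist coprime integers a_m, q_m with P ≤ q_m ≤ N/P and |θ + mα − a_m/q_m| ≤ P/(q_mN). Then ‖θ + mα − a/q‖ ≥ 1/(q·q_m) − 1/q_m², and consequently |∑_{n=1}^{⌊N⌋} e(n(θ + mα − a/q))| ≪ Nq/P. -/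
/-- The additive character `e(x) = exp(2πix)`. -/
noncomputable def eChar (x : ℝ) : ℂ := Complex.exp (2 * Real.pi * Complex.I * x)

open Complex in
lemma eChar_eq_exp (x : ℝ) : eChar x = exp (I * ((2 * Real.pi * x : ℝ) : ℂ)) := by
  unfold eChar; push_cast; ring_nf

lemma norm_eChar (x : ℝ) : ‖eChar x‖ = 1 := by
  rw [eChar_eq_exp, mul_comm, Complex.norm_exp_ofReal_mul_I]

lemma eChar_natCast_mul (n : ℕ) (x : ℝ) : eChar (n * x) = eChar x ^ n := by
  unfold eChar
  rw [← Complex.exp_nat_mul]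
  push_cast; ring_nf

lemma norm_eChar_sub_one (x : ℝ) : ‖eChar x - 1‖ = 2 * |Real.sin (Real.pi * x)| := by
  rw [eChar_eq_exp, Complex.norm_exp_I_mul_ofReal_sub_one, norm_mul, Real.norm_eq_abs,
    Real.norm_eq_abs, abs_two]
  ring_nf

lemma four_mul_distNearestInt_le_norm_eChar_sub_one (x : ℝ) :
    4 * distNearestInt x ≤ ‖eChar x - 1‖ := by
  set y := x - round x
  have hy : |y| ≤ 1 / 2 := abs_sub_round x
  have hsin : |Real.sin (Real.pi * x)| = |Real.sin (Real.pi * y)| := by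
    rw [show Real.pi * y = Real.pi * x - round x * Real.pi by ring, Real.sin_sub_int_mul_pi,
      abs_mul, abs_neg_one_zpow, one_mul]
  have hπy : |Real.pi * y| ≤ Real.pi / 2 := by
    rw [abs_mul, abs_of_pos Real.pi_pos]; nlinarith [Real.pi_pos]
  have hjordan := Real.mul_abs_le_abs_sin hπy
  rw [abs_mul, abs_of_pos Real.pi_pos, ← mul_assoc, div_mul_cancel₀ _ Real.pi_pos.ne'] at hjordan
  rw [norm_eChar_sub_one, hsin]
  unfold distNearestInt
  linarith

lemma norm_sum_Icc_pow_le {𝕜 : Type*} [NormedDivisionRing 𝕜] {z : 𝕜} (hz : ‖z‖ ≤ 1)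
    (hz1 : z ≠ 1) (K : ℕ) : ‖∑ n ∈ Finset.Icc 1 K, z ^ n‖ ≤ 2 / ‖z - 1‖ := by
  rw [← Finset.Ico_add_one_right_eq_Icc, geom_sum_Ico hz1 (by omega), norm_div, pow_one]
  gcongr
  calc ‖z ^ (K + 1) - z‖ ≤ ‖z‖ ^ (K + 1) + ‖z‖ := by rw [← norm_pow]; exact norm_sub_le _ _
    _ ≤ 1 + 1 := by gcongr; exact pow_le_one₀ (norm_nonneg z) hz
    _ = 2 := by norm_num

lemma norm_sum_eChar_natCast_mul_le {β δ : ℝ} (hδ : 0 < δ) (hβ : δ ≤ distNearestInt β)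
    (K : ℕ) : ‖∑ n ∈ Finset.Icc 1 K, eChar (n * β)‖ ≤ 1 / (2 * δ) := by
  have hlow := four_mul_distNearestInt_le_norm_eChar_sub_one β
  have hne : eChar β ≠ 1 := by
    intro h; rw [h, sub_self, norm_zero] at hlow; linarith
  simp only [eChar_natCast_mul]
  calc _ ≤ 2 / ‖eChar β - 1‖ := norm_sum_Icc_pow_le (norm_eChar β).le hne K
    _ ≤ 2 / (4 * δ) := by gcongr; linarith
    _ = 1 / (2 * δ) := by field_simp; norm_num

lemma distNearestInt_le_add_abs_sub (x y : ℝ) : distNearestInt x ≤ distNearestInt y + |x - y| := by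
  unfold distNearestInt
  calc |x - round x| ≤ |x - round y| := round_le x (round y)
    _ ≤ |y - round y| + |x - y| := by
      rw [add_comm]; exact abs_sub_le x y (round y)

lemma one_div_mul_le_distNearestInt_div_sub_div {a q b q' : ℤ} (hb : IsCoprime b q')
    (hq : 0 < q) (hqq' : q < q') :
    1 / ((q : ℝ) * q') ≤ distNearestInt ((b : ℝ) / q' - a / q) := by
  set k := round ((b : ℝ) / q' - a / q)
  have hnum : b * q - a * q' - k * q * q' ≠ 0 := by
    intro h
    have : q' ∣ q := hb.symm.dvd_of_dvd_mul_left ⟨a + k * q, by linarith⟩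
    have := Int.le_of_dvd hq this
    omega
  have hq'0 : (0 : ℝ) < q' := by exact_mod_cast hq.trans hqq'
  have hq0 : (0 : ℝ) < q := by exact_mod_cast hq
  have heq : (b : ℝ) / q' - a / q - k = ((b * q - a * q' - k * q * q' : ℤ) : ℝ) / (q * q') := by
    push_cast; field_simp
  unfold distNearestInt
  rw [heq, abs_div, abs_of_pos (mul_pos hq0 hq'0), ← Int.cast_abs]
  gcongr
  exact_mod_cast Int.one_le_abs hnum

lemma one_div_mul_sub_one_div_sq_le_distNearestInt {γ : ℝ} {a q b q' : ℤ} (hb : IsCoprime b q')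
    (hq : 0 < q) (hqq' : q < q') (hγ : |γ - b / q'| ≤ 1 / (q' : ℝ) ^ 2) :
    1 / ((q : ℝ) * q') - 1 / (q' : ℝ) ^ 2 ≤ distNearestInt (γ - a / q) := by
  have hsep := one_div_mul_le_distNearestInt_div_sub_div (a := a) hb hq hqq'
  have htri := distNearestInt_le_add_abs_sub ((b : ℝ) / q' - a / q) (γ - a / q)
  rw [show (b : ℝ) / q' - a / q - (γ - a / q) = -(γ - b / q') by ring, abs_neg] at htri
  linarith

lemma one_div_two_mul_le_one_div_mul_sub_one_div_sq {x y : ℝ} (hx : 0 < x) (hxy : 2 * x ≤ y) :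
    1 / (2 * x * y) ≤ 1 / (x * y) - 1 / y ^ 2 := by
  have hy : 0 < y := by linarith
  rw [div_sub_div _ _ (by positivity) (by positivity), div_le_div_iff₀ (by positivity)
    (by positivity)]
  nlinarith [mul_le_mul_of_nonneg_left hxy (by positivity : 0 ≤ x * y * y)]

theorem stmt13 :
    ∃ C : ℝ, 0 < C ∧
      ∀ (α θ : ℝ) (r s : ℤ), IsCoprime r s → 0 < s →
        |α - (r : ℝ) / (s : ℝ)| ≤ 1 / (s : ℝ) ^ 2 →
      ∀ (P M N : ℝ), 0 < P → 0 < M → 0 < N → 16 * (s : ℝ) * P ^ 2 ≤ N →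
      ∀ (a q : ℤ), IsCoprime a q → 0 < q → 2 * (q : ℝ) < P →
      ∀ m : ℤ, |(m : ℝ)| ≤ M →
      ∀ (am qm : ℤ), IsCoprime am qm → P ≤ (qm : ℝ) → (qm : ℝ) ≤ N / P →
        |θ + (m : ℝ) * α - (am : ℝ) / (qm : ℝ)| ≤ P / ((qm : ℝ) * N) →
      1 / ((q : ℝ) * (qm : ℝ)) - 1 / (qm : ℝ) ^ 2 ≤
          distNearestInt (θ + (m : ℝ) * α - (a : ℝ) / (q : ℝ)) ∧
        ‖∑ n ∈ Finset.Icc 1 ⌊N⌋₊,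
            eChar ((n : ℝ) * (θ + (m : ℝ) * α - (a : ℝ) / (q : ℝ)))‖ ≤
          C * N * (q : ℝ) / P := by
  refine ⟨1, one_pos, ?_⟩
  intro α θ r s _ _ _ P M N hP _ _ _ a q _ hq hqP m _ am qm hcop hPqm hqmN hclose
  have hq0 : (0 : ℝ) < q := by exact_mod_cast hq
  have hqm0 : (0 : ℝ) < qm := hP.trans_le hPqm
  have hqmP : qm * P ≤ N := (le_div_iff₀ hP).mp hqmN
  have hclose' : |θ + m * α - am / qm| ≤ 1 / (qm : ℝ) ^ 2 := by
    refine hclose.trans ?_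
    rw [div_le_div_iff₀ (by positivity) (by positivity)]
    nlinarith
  have hdist := one_div_mul_sub_one_div_sq_le_distNearestInt (a := a) hcop hq
    (by exact_mod_cast (by linarith : (q : ℝ) < qm)) hclose'
  refine ⟨hdist, ?_⟩
  have hhalf := (one_div_two_mul_le_one_div_mul_sub_one_div_sq hq0 (by linarith)).trans hdist
  calc _ ≤ 1 / (2 * (1 / (2 * (q : ℝ) * qm))) :=
        norm_sum_eChar_natCast_mul_le (by positivity) hhalf _
    _ = (q : ℝ) * qm := by field_simp
    _ ≤ 1 * N * q / P := by rw [le_div_iff₀ hP]; nlinarith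
end
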